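/- arXiv:2501.00415 — 2 statements merged into one kernel-verified Lean document; each statement's English description precedes it below -/
import Mathlib

section
/- Let S ⊆ ℝ^d be the strip {x : |⟨x, v⟩ + c| ≤ |v|²} for some nonzero v ∈ ℝ^d and c ∈ ℝ, and let f(x) = |⟨x, v⟩ + c|. Then f is convex, and the set of points x such that f is not differentiable at prox_f(x) is exactly S. -/
open Set RealInnerProductSpace

/-- `y` is a proximal point of `f` at `x`: it minimizes `z ↦ f z + ‖x - z‖² / 2`. -/
def IsProxPt {d : ℕ} (f : EuclideanSpace ℝ (Fin d) → ℝ)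
    (x y : EuclideanSpace ℝ (Fin d)) : Prop :=
  ∀ z, f y + ‖x - y‖ ^ 2 / 2 ≤ f z + ‖x - z‖ ^ 2 / 2

/-- The generalized strip `S(f)`: points `x` such that `f` is not differentiable at
`prox_f(x)`.  (For convex `f` the proximal point exists and is unique.) -/
def GStrip {d : ℕ} (f : EuclideanSpace ℝ (Fin d) → ℝ) : Set (EuclideanSpace ℝ (Fin d)) :=
  {x | ∀ y, IsProxPt f x y → ¬ DifferentiableAt ℝ f y}

section helpers
variable {d : ℕ}

lemma hg_diff (v : EuclideanSpace ℝ (Fin d)) (c : ℝ) :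
    Differentiable ℝ (fun x : EuclideanSpace ℝ (Fin d) => ⟪v, x⟫ + c) :=
  ((innerSL ℝ v).differentiable).add_const c

lemma inner_shift (v : EuclideanSpace ℝ (Fin d)) (c : ℝ) (x : EuclideanSpace ℝ (Fin d)) (a : ℝ) :
    ⟪v, x - a • v⟫ + c = (⟪v, x⟫ + c) - a * ‖v‖ ^ 2 := by
  rw [inner_sub_right, real_inner_smul_right, real_inner_self_eq_norm_sq]; ring

lemma norm_shift (v : EuclideanSpace ℝ (Fin d)) (x : EuclideanSpace ℝ (Fin d)) (a : ℝ) :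
    ‖x - (x - a • v)‖ ^ 2 = a ^ 2 * ‖v‖ ^ 2 := by
  rw [sub_sub_cancel, norm_smul, mul_pow]; simp [sq_abs]

lemma cauchy (v : EuclideanSpace ℝ (Fin d)) (c : ℝ) (x z : EuclideanSpace ℝ (Fin d)) :
    |(⟪v, x⟫ + c) - (⟪v, z⟫ + c)| ≤ ‖v‖ * ‖x - z‖ := by
  have h : (⟪v, x⟫ + c) - (⟪v, z⟫ + c) = ⟪v, x - z⟫ := by
    rw [inner_sub_right]; ring
  rw [h]
  exact abs_real_inner_le_norm v (x - z)

lemma diff_abs (v : EuclideanSpace ℝ (Fin d)) (c : ℝ) (y : EuclideanSpace ℝ (Fin d))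
    (hy : ⟪v, y⟫ + c ≠ 0) :
    DifferentiableAt ℝ (fun x => |⟪v, x⟫ + c|) y := by
  rcases hy.lt_or_gt with h | h
  · have hopen : IsOpen {x : EuclideanSpace ℝ (Fin d) | ⟪v, x⟫ + c < 0} :=
      isOpen_lt (hg_diff v c).continuous continuous_const
    have hev : (fun x => |⟪v, x⟫ + c|) =ᶠ[nhds y] (fun x => -(⟪v, x⟫ + c)) := by
      filter_upwards [hopen.mem_nhds h] with x hx
      exact abs_of_neg hx
    exact (((hg_diff v c) y).neg).congr_of_eventuallyEq hev
  · have hopen : IsOpen {x : EuclideanSpace ℝ (Fin d) | 0 < ⟪v, x⟫ + c} :=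
      isOpen_lt continuous_const (hg_diff v c).continuous
    have hev : (fun x => |⟪v, x⟫ + c|) =ᶠ[nhds y] (fun x => ⟪v, x⟫ + c) := by
      filter_upwards [hopen.mem_nhds h] with x hx
      exact abs_of_pos hx
    exact ((hg_diff v c) y).congr_of_eventuallyEq hev

lemma not_diff_abs (v : EuclideanSpace ℝ (Fin d)) (hv : v ≠ 0) (c : ℝ)
    (y : EuclideanSpace ℝ (Fin d)) (hy : ⟪v, y⟫ + c = 0) :
    ¬ DifferentiableAt ℝ (fun x => |⟪v, x⟫ + c|) y := by
  intro hf
  have hN : (0:ℝ) < ‖v‖ ^ 2 := by have := norm_pos_iff.mpr hv; positivity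
  have hmap : DifferentiableAt ℝ (fun s : ℝ => y + s • v) 0 :=
    ((differentiableAt_id).smul_const v).const_add y
  have hcomp : DifferentiableAt ℝ ((fun x => |⟪v, x⟫ + c|) ∘ (fun s : ℝ => y + s • v)) 0 := by
    apply DifferentiableAt.comp
    · simpa using hf
    · exact hmap
  have heq : ∀ s : ℝ, |⟪v, y + s • v⟫ + c| = |s| * ‖v‖ ^ 2 := by
    intro s
    rw [inner_add_right, real_inner_smul_right, real_inner_self_eq_norm_sq]
    have h1 : ⟪v, y⟫ + s * ‖v‖ ^ 2 + c = s * ‖v‖ ^ 2 := by linarith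
    rw [h1, abs_mul, abs_of_nonneg (by positivity : (0:ℝ) ≤ ‖v‖ ^ 2)]
  have habs : DifferentiableAt ℝ (fun s : ℝ => |s|) 0 := by
    have h2 : (fun s : ℝ => |s|) =
        fun s => ((fun x => |⟪v, x⟫ + c|) ∘ (fun s : ℝ => y + s • v)) s * (‖v‖ ^ 2)⁻¹ := by
      funext s
      simp only [Function.comp_apply, heq s]
      field_simp
    rw [h2]
    exact hcomp.mul_const _
  exact not_differentiableAt_abs_zero habs

lemma arith1 (N t s r : ℝ) (hN : 0 < N) (hts : |t - s| ≤ N * r)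
    (ht : |t| ≤ N ^ 2) : t ^ 2 / N ^ 2 / 2 ≤ |s| + r ^ 2 / 2 := by
  have h2 : (t - s) ^ 2 ≤ (N * r) ^ 2 := by
    nlinarith [sq_abs (t - s), abs_nonneg (t - s)]
  have h1 : t * s ≤ N ^ 2 * |s| := by
    calc t * s ≤ |t * s| := le_abs_self _
    _ = |t| * |s| := abs_mul t s
    _ ≤ N ^ 2 * |s| := mul_le_mul_of_nonneg_right ht (abs_nonneg s)
  have key : t ^ 2 ≤ 2 * N ^ 2 * |s| + N ^ 2 * r ^ 2 := by nlinarith [sq_nonneg s]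
  rw [div_div, div_le_iff₀ (by positivity)]
  nlinarith [key]

lemma arith2 (N t s r : ℝ) (hts : |t - s| ≤ N * r) :
    |t| - N ^ 2 / 2 ≤ |s| + r ^ 2 / 2 := by
  nlinarith [sq_nonneg (r - N), abs_sub_abs_le_abs_sub t s]

lemma arith3 (N t s r : ℝ) (hN : 0 < N) (hts : |t - s| ≤ N * r)
    (ht : |t| ≤ N ^ 2) (hle : |s| + r ^ 2 / 2 ≤ t ^ 2 / N ^ 2 / 2) : s = 0 := by
  have h2 : (t - s) ^ 2 ≤ (N * r) ^ 2 := by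
    nlinarith [sq_abs (t - s), abs_nonneg (t - s)]
  have h1 : t * s ≤ N ^ 2 * |s| := by
    calc t * s ≤ |t * s| := le_abs_self _
    _ = |t| * |s| := abs_mul t s
    _ ≤ N ^ 2 * |s| := mul_le_mul_of_nonneg_right ht (abs_nonneg s)
  rw [div_div, le_div_iff₀ (by positivity)] at hle
  have hs2 : s ^ 2 ≤ 0 := by nlinarith [abs_nonneg s]
  nlinarith [sq_abs s, abs_nonneg s, sq_nonneg s]

end helpers

/-- For `f x = |⟪v, x⟫ + c|` with `v ≠ 0`, `f` is convex and
`S(f)` is exactly the strip `{x : |⟪v, x⟫ + c| ≤ ‖v‖²}`. -/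
theorem strip_is_generalized_strip (d : ℕ) (v : EuclideanSpace ℝ (Fin d)) (hv : v ≠ 0)
    (c : ℝ) :
    ConvexOn ℝ univ (fun x => |⟪v, x⟫ + c|) ∧
    GStrip (fun x => |⟪v, x⟫ + c|) = {x | |⟪v, x⟫ + c| ≤ ‖v‖ ^ 2} := by
  have hNpos : (0:ℝ) < ‖v‖ := norm_pos_iff.mpr hv
  have hN2 : (0:ℝ) < ‖v‖ ^ 2 := by positivity
  constructor
  · refine ⟨convex_univ, ?_⟩
    intro x _ y _ a b ha hb hab
    simp only
    have h1 : ⟪v, a • x + b • y⟫ + c = a * (⟪v, x⟫ + c) + b * (⟪v, y⟫ + c) := by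
      rw [inner_add_right, real_inner_smul_right, real_inner_smul_right]
      linear_combination c * hab.symm
    rw [h1]
    calc |a * (⟪v, x⟫ + c) + b * (⟪v, y⟫ + c)|
        ≤ |a * (⟪v, x⟫ + c)| + |b * (⟪v, y⟫ + c)| := abs_add_le _ _
      _ = a * |⟪v, x⟫ + c| + b * |⟪v, y⟫ + c| := by
          rw [abs_mul, abs_mul, abs_of_nonneg ha, abs_of_nonneg hb]
  · ext x
    simp only [GStrip, mem_setOf_eq]
    constructor
    · -- GStrip → strip, by contraposition
      intro hx
      by_contra hout
      push_neg at hout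
      set t := ⟪v, x⟫ + c with htdef
      set σ : ℝ := if 0 < t then 1 else -1 with hσdef
      have htne : t ≠ 0 := by
        intro h
        rw [h] at hout
        simp at hout
        linarith
      have hσcases : σ = 1 ∨ σ = -1 := by
        by_cases h : 0 < t
        · left; simp [hσdef, h]
        · right; simp [hσdef, h]
      have hσt : σ * t = |t| := by
        by_cases h : 0 < t
        · simp [hσdef, h, abs_of_pos h]
        · push_neg at h
          have h' : t < 0 := lt_of_le_of_ne h htne
          simp [hσdef, not_lt.mpr h, abs_of_neg h']
      set y : EuclideanSpace ℝ (Fin d) := x - σ • v with hydef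
      have hs' : ⟪v, y⟫ + c = t - σ * ‖v‖ ^ 2 := inner_shift v c x σ
      have hσsq : σ * σ = 1 := by rcases hσcases with h | h <;> rw [h] <;> norm_num
      have hσs' : σ * (⟪v, y⟫ + c) = |t| - ‖v‖ ^ 2 := by
        rw [hs']; linear_combination hσt - ‖v‖ ^ 2 * hσsq
      have hσs'pos : 0 < σ * (⟪v, y⟫ + c) := by rw [hσs']; linarith
      have habs' : |⟪v, y⟫ + c| = |t| - ‖v‖ ^ 2 := by
        rcases hσcases with h | h
        · rw [h, one_mul] at hσs'pos hσs'
          rw [abs_of_pos hσs'pos, ← hσs']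
        · rw [h] at hσs'pos hσs'
          have hlt : ⟪v, y⟫ + c < 0 := by nlinarith
          rw [abs_of_neg hlt, ← hσs']; ring
      have hnorm : ‖x - y‖ ^ 2 = ‖v‖ ^ 2 := by
        rw [hydef, norm_shift]
        nlinarith [hσsq]
      have hprox : IsProxPt (fun x => |⟪v, x⟫ + c|) x y := by
        intro z
        simp only
        have hc := cauchy v c x z
        have h2 := arith2 ‖v‖ t (⟪v, z⟫ + c) ‖x - z‖ hc
        rw [habs', hnorm]
        linarith
      have hdiff : DifferentiableAt ℝ (fun x => |⟪v, x⟫ + c|) y := by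
        apply diff_abs
        intro h
        rw [h] at habs'
        simp at habs'
        linarith
      exact hx y hprox hdiff
    · -- strip → GStrip
      intro hx y hy
      set t := ⟪v, x⟫ + c with htdef
      set y₀ : EuclideanSpace ℝ (Fin d) := x - (t / ‖v‖ ^ 2) • v with hy0def
      have key1 : ∀ N a : ℝ, 0 < N → a - a / N * N = 0 := by
        intro N a hN; field_simp; ring
      have key2 : ∀ N a : ℝ, 0 < N → (a / N) ^ 2 * N = a ^ 2 / N := by
        intro N a hN; field_simp
      have h0 : ⟪v, y₀⟫ + c = 0 := by
        rw [hy0def, inner_shift]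
        exact key1 (‖v‖ ^ 2) t hN2
      have hnorm0 : ‖x - y₀‖ ^ 2 = t ^ 2 / ‖v‖ ^ 2 := by
        rw [hy0def, norm_shift]
        exact key2 (‖v‖ ^ 2) t hN2
      have hle := hy y₀
      simp only [h0, abs_zero, zero_add, hnorm0] at hle
      have hs : ⟪v, y⟫ + c = 0 := by
        refine arith3 ‖v‖ t (⟪v, y⟫ + c) ‖x - y‖ hNpos (cauchy v c x y) hx ?_
        linarith [hle]
      exact not_diff_abs v hv c y hs
end

section
/- Let f : ℝ^d → ℝ be a polyhedral function with f = max_i f_i where f_i are affine with gradients v_i, and define S(f) as the set of x such that f is not differentiable at prox_f(x). Then every boundary point of S(f) lies in one of the finitely many hyperplanes H_{i,j,k} = {x : (f_i - f_j)(x - v_k) = 0} with i ≠ j and v_i ≠ v_j; in particular, S(f) is a set whose topological boundary can be covered by finitely many hyperplanes. -/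
open Set RealInnerProductSpace

/- ---------------- auxiliary lemmas ---------------- -/

private lemma fderiv_eq_of_subgrad {E : Type*} [NormedAddCommGroup E] [InnerProductSpace ℝ E]
    {f : E → ℝ} {y g : E} (h : ∀ z, f y + ⟪g, z - y⟫ ≤ f z)
    (hd : DifferentiableAt ℝ f y) : fderiv ℝ f y = innerSL ℝ g := by
  have hmin : IsLocalMin (fun z => f z - innerSL ℝ g z) y := by
    apply Filter.Eventually.of_forall
    intro z
    have := h z
    simp only [innerSL_apply_apply, inner_sub_right] at this ⊢
    linarith
  have h0 := hmin.fderiv_eq_zero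
  rw [fderiv_fun_sub hd ((innerSL ℝ g).differentiableAt), (innerSL ℝ g).fderiv, sub_eq_zero] at h0
  exact h0

section Main

variable {d n : ℕ} (v : Fin (n + 1) → EuclideanSpace ℝ (Fin d)) (c : Fin (n + 1) → ℝ)
  (f : EuclideanSpace ℝ (Fin d) → ℝ)
  (hf : ∀ x, f x = Finset.univ.sup' Finset.univ_nonempty (fun i => ⟪v i, x⟫ + c i))

include hf

private lemma le_f (i : Fin (n + 1)) (x : EuclideanSpace ℝ (Fin d)) :
    ⟪v i, x⟫ + c i ≤ f x := by
  rw [hf]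
  exact Finset.le_sup' (fun i => ⟪v i, x⟫ + c i) (Finset.mem_univ i)

private lemma exists_active (y : EuclideanSpace ℝ (Fin d)) :
    ∃ k, f y = ⟪v k, y⟫ + c k := by
  obtain ⟨k, _, hk⟩ := Finset.exists_mem_eq_sup' (Finset.univ_nonempty (α := Fin (n + 1)))
    (fun i => ⟪v i, y⟫ + c i)
  exact ⟨k, by rw [hf]; exact hk⟩

private lemma f_cont : Continuous f := by
  have hfe : f = fun x => Finset.univ.sup' Finset.univ_nonempty (fun i => ⟪v i, x⟫ + c i) :=
    funext hf
  rw [hfe]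
  exact Continuous.finset_sup'_apply _
    (fun i _ => (Continuous.inner continuous_const continuous_id).add continuous_const)

private lemma convex_comb {t : ℝ} (ht0 : 0 ≤ t) (ht1 : t ≤ 1)
    (a b : EuclideanSpace ℝ (Fin d)) :
    f ((1 - t) • a + t • b) ≤ (1 - t) * f a + t * f b := by
  rw [hf]
  apply Finset.sup'_le
  intro i _
  have key : ⟪v i, (1 - t) • a + t • b⟫ + c i
      = (1 - t) * (⟪v i, a⟫ + c i) + t * (⟪v i, b⟫ + c i) := by
    rw [inner_add_right, real_inner_smul_right, real_inner_smul_right]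
    ring
  rw [key]
  have h1 := le_f v c f hf i a
  have h2 := le_f v c f hf i b
  have ht1' : 0 ≤ 1 - t := by linarith
  nlinarith

private lemma prox_subgrad {x y : EuclideanSpace ℝ (Fin d)} (hp : IsProxPt f x y) :
    ∀ z, f y + ⟪x - y, z - y⟫ ≤ f z := by
  intro z
  set D := f z - f y - ⟪x - y, z - y⟫ with hD
  set C := ‖z - y‖ ^ 2 / 2 with hCdef
  have hC : 0 ≤ C := by positivity
  have key : ∀ t : ℝ, 0 < t → t ≤ 1 → 0 ≤ D + t * C := by
    intro t ht0 ht1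
    have h1 := hp ((1 - t) • y + t • z)
    have h2 := convex_comb v c f hf ht0.le ht1 y z
    have h3 : ‖x - ((1 - t) • y + t • z)‖ ^ 2
        = ‖x - y‖ ^ 2 - 2 * (t * ⟪x - y, z - y⟫) + t ^ 2 * ‖z - y‖ ^ 2 := by
      have e : x - ((1 - t) • y + t • z) = (x - y) - t • (z - y) := by module
      rw [e, norm_sub_sq_real, real_inner_smul_right, norm_smul, Real.norm_eq_abs, mul_pow, sq_abs]
    have h4 : 0 ≤ t * (D + t * C) := by nlinarith
    nlinarith
  have hD0 : 0 ≤ D := by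
    by_contra hneg
    push_neg at hneg
    rcases eq_or_lt_of_le hC with hC0 | hCpos
    · have := key 1 one_pos le_rfl
      rw [← hC0] at this
      linarith
    · have htpos : 0 < -D / (2 * C) := div_pos (by linarith) (by linarith)
      have := key (min 1 (-D / (2 * C))) (lt_min one_pos htpos) (min_le_left _ _)
      have hm : min 1 (-D / (2 * C)) * C ≤ (-D / (2 * C)) * C :=
        mul_le_mul_of_nonneg_right (min_le_right _ _) hC
      have he : (-D / (2 * C)) * C = -D / 2 := by field_simp
      rw [he] at hm
      linarith
  simp only [hD] at hD0
  linarith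

private lemma active_subgrad {k : Fin (n + 1)} {y : EuclideanSpace ℝ (Fin d)}
    (hk : f y = ⟪v k, y⟫ + c k) :
    ∀ z, f y + ⟪v k, z - y⟫ ≤ f z := by
  intro z
  have h1 := le_f v c f hf k z
  rw [inner_sub_right]
  linarith [hk.le, hk.ge]

private lemma nonexpansive {x x' y y' : EuclideanSpace ℝ (Fin d)}
    (h : IsProxPt f x y) (h' : IsProxPt f x' y') : ‖y - y'‖ ≤ ‖x - x'‖ := by
  have h1 := prox_subgrad v c f hf h y'
  have h2 := prox_subgrad v c f hf h' y
  have hsum : ⟪x - y, y' - y⟫ + ⟪x' - y', y - y'⟫ ≤ 0 := by linarith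
  have hexp : ⟪x - y, y' - y⟫ + ⟪x' - y', y - y'⟫
      = ⟪x' - x, y - y'⟫ + ‖y - y'‖ ^ 2 := by
    rw [← real_inner_self_eq_norm_sq]
    simp only [inner_sub_left, inner_sub_right]
    rw [real_inner_comm y' y]
    ring
  have hkey : ‖y - y'‖ ^ 2 ≤ ⟪x - x', y - y'⟫ := by
    have : ⟪x' - x, y - y'⟫ = -⟪x - x', y - y'⟫ := by
      rw [← inner_neg_left]; congr 1; abel
    rw [hexp, this] at hsum
    linarith
  have hcs := real_inner_le_norm (x - x') (y - y')
  nlinarith [norm_nonneg (y - y'), norm_nonneg (x - x')]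

private lemma prox_exists (x : EuclideanSpace ℝ (Fin d)) : ∃ y, IsProxPt f x y := by
  classical
  set K := Finset.univ.sup' (Finset.univ_nonempty (α := Fin (n + 1))) (fun i => ‖v i‖) with hK
  have hKi : ∀ i, ‖v i‖ ≤ K := fun i => Finset.le_sup' (fun i => ‖v i‖) (Finset.mem_univ i)
  have hK0 : 0 ≤ K := (norm_nonneg (v 0)).trans (hKi 0)
  have hLip : ∀ a b : EuclideanSpace ℝ (Fin d), f a ≤ f b + K * ‖a - b‖ := by
    intro a b
    rw [hf a]
    apply Finset.sup'_le
    intro i _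
    have e : ⟪v i, a⟫ = ⟪v i, b⟫ + ⟪v i, a - b⟫ := by rw [inner_sub_right]; ring
    have h2 : ⟪v i, a - b⟫ ≤ K * ‖a - b‖ :=
      (real_inner_le_norm _ _).trans
        (mul_le_mul_of_nonneg_right (hKi i) (norm_nonneg _))
    have h3 := le_f v c f hf i b
    linarith
  set F := fun z : EuclideanSpace ℝ (Fin d) => f z + ‖x - z‖ ^ 2 / 2 with hFdef
  have hFc : Continuous F := by
    apply (f_cont v c f hf).add
    exact (((continuous_const.sub continuous_id).norm.pow 2).div_const 2)
  have hxmem : x ∈ Metric.closedBall x (2 * K + 1) := by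
    simp [Metric.mem_closedBall]
    linarith
  obtain ⟨y, hyB, hymin⟩ := (isCompact_closedBall x (2 * K + 1)).exists_isMinOn
    ⟨x, hxmem⟩ hFc.continuousOn
  refine ⟨y, fun z => ?_⟩
  rcases le_or_gt (dist z x) (2 * K + 1) with hz | hz
  · exact isMinOn_iff.mp hymin z (Metric.mem_closedBall.mpr hz)
  · have hd : 2 * K + 1 < ‖x - z‖ := by
      rw [dist_eq_norm] at hz
      rw [norm_sub_rev]
      exact hz
    have h1 := hLip x z
    have h2 : F x ≤ F z := by
      simp only [hFdef]
      have hn : 0 ≤ ‖x - z‖ := norm_nonneg _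
      have hxx : ‖x - x‖ ^ 2 = 0 := by simp
      have hq : (2 * K + 1) * ‖x - z‖ ≤ ‖x - z‖ ^ 2 := by nlinarith
      nlinarith
    have h3 := isMinOn_iff.mp hymin x hxmem
    simp only [hFdef] at h2 h3 ⊢
    calc f y + ‖x - y‖ ^ 2 / 2 ≤ f x + ‖x - x‖ ^ 2 / 2 := h3
    _ ≤ f z + ‖x - z‖ ^ 2 / 2 := h2

private lemma sub_prox_eq {x y : EuclideanSpace ℝ (Fin d)} {k : Fin (n + 1)}
    (hp : IsProxPt f x y) (hd : DifferentiableAt ℝ f y)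
    (hk : f y = ⟪v k, y⟫ + c k) : x - y = v k := by
  have e1 := fderiv_eq_of_subgrad (prox_subgrad v c f hf hp) hd
  have e2 := fderiv_eq_of_subgrad (active_subgrad v c f hf hk) hd
  have e3 : innerSL ℝ (x - y) = innerSL ℝ (v k) := e1 ▸ e2
  have e4 := ContinuousLinearMap.ext_iff.mp e3 (x - y - v k)
  simp only [innerSL_apply_apply, inner_sub_left] at e4
  have h5 : ⟪x - y - v k, x - y - v k⟫ = 0 := by
    simp only [inner_sub_left]
    linarith
  exact sub_eq_zero.mp (inner_self_eq_zero.mp h5)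

private lemma local_affine {y₀ : EuclideanSpace ℝ (Fin d)} {k₀ : Fin (n + 1)}
    (hk₀ : f y₀ = ⟪v k₀, y₀⟫ + c k₀)
    (hall : ∀ ℓ, f y₀ = ⟪v ℓ, y₀⟫ + c ℓ → v ℓ = v k₀) :
    f =ᶠ[nhds y₀] fun y => ⟪v k₀, y⟫ + c k₀ := by
  have hev : ∀ ℓ, ∀ᶠ y in nhds y₀, ⟪v ℓ, y⟫ + c ℓ ≤ ⟪v k₀, y⟫ + c k₀ := by
    intro ℓ
    rcases lt_or_eq_of_le (le_f v c f hf ℓ y₀) with hlt | heq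
    · have hc1 : Continuous fun y : EuclideanSpace ℝ (Fin d) => ⟪v ℓ, y⟫ + c ℓ :=
        (Continuous.inner continuous_const continuous_id).add continuous_const
      have hc2 : Continuous fun y : EuclideanSpace ℝ (Fin d) => ⟪v k₀, y⟫ + c k₀ :=
        (Continuous.inner continuous_const continuous_id).add continuous_const
      have := ContinuousAt.eventually_lt hc1.continuousAt hc2.continuousAt
        (by rw [← hk₀]; exact hlt)
      exact this.mono fun y hy => hy.le
    · have hv := hall ℓ heq.symm
      have hcc : c ℓ = c k₀ := by
        have h1 : ⟪v ℓ, y₀⟫ + c ℓ = ⟪v k₀, y₀⟫ + c k₀ := heq.trans hk₀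
        rw [hv] at h1
        linarith
      exact Filter.Eventually.of_forall fun y => by rw [hv, hcc]
  have hevall := Filter.eventually_all.mpr hev
  filter_upwards [hevall] with y hy
  refine le_antisymm ?_ (le_f v c f hf k₀ y)
  rw [hf]
  exact Finset.sup'_le _ _ fun i _ => hy i

private lemma diff_on_ball {y₀ : EuclideanSpace ℝ (Fin d)} {k₀ : Fin (n + 1)}
    (hk₀ : f y₀ = ⟪v k₀, y₀⟫ + c k₀)
    (hall : ∀ ℓ, f y₀ = ⟪v ℓ, y₀⟫ + c ℓ → v ℓ = v k₀) :
    ∃ ε > 0, ∀ y, dist y y₀ < ε → DifferentiableAt ℝ f y := by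
  have hev := local_affine v c f hf hk₀ hall
  rw [Filter.eventuallyEq_iff_exists_mem] at hev
  obtain ⟨s, hs, hEq⟩ := hev
  rw [mem_nhds_iff] at hs
  obtain ⟨t, hts, hto, hyt⟩ := hs
  obtain ⟨ε, hε, hball⟩ := Metric.isOpen_iff.mp hto y₀ hyt
  refine ⟨ε, hε, fun y hy => ?_⟩
  have hmem : t ∈ nhds y := hto.mem_nhds (hball (Metric.mem_ball.mpr hy))
  have heq : f =ᶠ[nhds y] fun z => ⟪v k₀, z⟫ + c k₀ :=
    Filter.eventually_of_mem hmem fun z hz => hEq (hts hz)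
  have hφ : DifferentiableAt ℝ (fun z : EuclideanSpace ℝ (Fin d) => ⟪v k₀, z⟫ + c k₀) y :=
    ((differentiableAt_const _).inner ℝ differentiableAt_id).add_const _
  exact heq.differentiableAt_iff.mpr hφ

private lemma nondiff_char {y₀ : EuclideanSpace ℝ (Fin d)}
    (hnd : ¬ DifferentiableAt ℝ f y₀) :
    ∃ i j, f y₀ = ⟪v i, y₀⟫ + c i ∧ f y₀ = ⟪v j, y₀⟫ + c j ∧ v i ≠ v j := by
  by_contra hc
  push_neg at hc
  obtain ⟨k₀, hk₀⟩ := exists_active v c f hf y₀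
  have hall : ∀ ℓ, f y₀ = ⟪v ℓ, y₀⟫ + c ℓ → v ℓ = v k₀ := fun ℓ hℓ => by
    by_contra hne
    exact hne (hc ℓ k₀ hℓ hk₀)
  have hev := local_affine v c f hf hk₀ hall
  have hφ : DifferentiableAt ℝ (fun z : EuclideanSpace ℝ (Fin d) => ⟪v k₀, z⟫ + c k₀) y₀ :=
    ((differentiableAt_const _).inner ℝ differentiableAt_id).add_const _
  exact hnd (hev.differentiableAt_iff.mpr hφ)

end Main

/-- For a polyhedral function `f = max_i (⟪v i, ·⟫ + c i)`, every point of the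
topological boundary of `S(f)` lies in one of the hyperplanes
`H_{i,j,k} = {x : (f_i - f_j)(x - v k) = 0}` with `i ≠ j` and `v i ≠ v j`; in particular,
`∂(S(f))` is covered by finitely many hyperplanes, i.e. `S(f)` is a polyhedron. -/
theorem generalized_strip_boundary_in_hyperplanes (d n : ℕ)
    (v : Fin (n + 1) → EuclideanSpace ℝ (Fin d)) (c : Fin (n + 1) → ℝ)
    (f : EuclideanSpace ℝ (Fin d) → ℝ)
    (hf : ∀ x, f x = Finset.univ.sup' Finset.univ_nonempty (fun i => ⟪v i, x⟫ + c i)) :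
    ∀ x ∈ frontier (GStrip f), ∃ i j k : Fin (n + 1), i ≠ j ∧ v i ≠ v j ∧
      ⟪v i, x - v k⟫ + c i = ⟪v j, x - v k⟫ + c j := by
  intro x₀ hx₀
  have hxc : x₀ ∈ closure (GStrip f) := hx₀.1
  have hxi : x₀ ∉ interior (GStrip f) := hx₀.2
  obtain ⟨y₀, hy₀⟩ := prox_exists v c f hf x₀
  -- f is not differentiable at y₀
  have hnd : ¬ DifferentiableAt ℝ f y₀ := by
    intro hdiff
    obtain ⟨k₀, hk₀⟩ := exists_active v c f hf y₀
    have hall : ∀ ℓ, f y₀ = ⟪v ℓ, y₀⟫ + c ℓ → v ℓ = v k₀ := by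
      intro ℓ hℓ
      have e1 := fderiv_eq_of_subgrad (active_subgrad v c f hf hℓ) hdiff
      have e2 := fderiv_eq_of_subgrad (active_subgrad v c f hf hk₀) hdiff
      have e3 : innerSL ℝ (v ℓ) = innerSL ℝ (v k₀) := e1 ▸ e2
      have e4 := ContinuousLinearMap.ext_iff.mp e3 (v ℓ - v k₀)
      simp only [innerSL_apply_apply] at e4
      have h5 : ⟪v ℓ - v k₀, v ℓ - v k₀⟫ = 0 := by
        rw [inner_sub_left]; linarith
      exact sub_eq_zero.mp (inner_self_eq_zero.mp h5)
    obtain ⟨ε, hε, hb⟩ := diff_on_ball v c f hf hk₀ hall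
    have hdisj : ∀ x ∈ Metric.ball x₀ ε, x ∉ GStrip f := by
      intro x hx hxS
      obtain ⟨y, hy⟩ := prox_exists v c f hf x
      have hne := nonexpansive v c f hf hy hy₀
      have hdy : dist y y₀ < ε := by
        rw [dist_eq_norm]
        calc ‖y - y₀‖ ≤ ‖x - x₀‖ := hne
        _ < ε := by rw [← dist_eq_norm]; exact Metric.mem_ball.mp hx
      exact hxS y hy (hb y hdy)
    rcases mem_closure_iff.mp hxc (Metric.ball x₀ ε) Metric.isOpen_ball
      (Metric.mem_ball_self hε) with ⟨z, hz1, hz2⟩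
    exact hdisj z hz1 hz2
  -- frequently, points near x₀ are not in the strip
  have hfreq : ∃ᶠ x in nhds x₀, x ∉ GStrip f := by
    rw [Filter.not_eventually.symm]
    intro h
    exact hxi (mem_interior_iff_mem_nhds.mpr (by simpa using h))
  -- from each such point extract an index k with prox x = x - v k
  have hfreq2 : ∃ᶠ x in nhds x₀, ∃ k, dist y₀ (x₀ - v k) ≤ 2 * dist x x₀ := by
    refine hfreq.mono fun x hx => ?_
    simp only [GStrip, Set.mem_setOf_eq, not_forall, not_not] at hx
    obtain ⟨y, hy, hdy⟩ := hx
    obtain ⟨k, hk⟩ := exists_active v c f hf y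
    have hxy : x - y = v k := sub_prox_eq v c f hf hy hdy hk
    have hyeq : y = x - v k := by
      rw [← hxy]; abel
    refine ⟨k, ?_⟩
    have h1 : dist y₀ y ≤ dist x₀ x := by
      rw [dist_eq_norm, dist_eq_norm]
      exact nonexpansive v c f hf hy₀ hy
    have h2 : dist y (x₀ - v k) = dist x x₀ := by
      rw [hyeq, dist_eq_norm, dist_eq_norm]
      congr 1
      abel
    calc dist y₀ (x₀ - v k) ≤ dist y₀ y + dist y (x₀ - v k) := dist_triangle _ _ _
    _ ≤ dist x₀ x + dist x x₀ := by rw [h2]; exact add_le_add_left h1 _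
    _ = 2 * dist x x₀ := by rw [dist_comm]; ring
  -- pigeonhole over the finitely many k
  have hpig : ∃ k, ∃ᶠ x in nhds x₀, dist y₀ (x₀ - v k) ≤ 2 * dist x x₀ := by
    by_contra hcon
    push_neg at hcon
    have hall := Filter.eventually_all.mpr hcon
    obtain ⟨x, hx1, hx2⟩ := (hfreq2.and_eventually hall).exists
    obtain ⟨k, hk⟩ := hx1
    exact absurd hk (not_le.mpr (hx2 k))
  obtain ⟨k, hk⟩ := hpig
  -- conclude y₀ = x₀ - v k
  have hy0eq : y₀ = x₀ - v k := by
    have hle : ∀ ε : ℝ, 0 < ε → dist y₀ (x₀ - v k) ≤ ε := by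
      intro ε hε
      have hev : ∀ᶠ x in nhds x₀, dist x x₀ < ε / 2 := by
        filter_upwards [Metric.ball_mem_nhds x₀ (by positivity : (0:ℝ) < ε / 2)] with x hx
        exact Metric.mem_ball.mp hx
      obtain ⟨x, hx1, hx2⟩ := (hk.and_eventually hev).exists
      linarith
    have h0 : dist y₀ (x₀ - v k) ≤ 0 := le_of_forall_pos_le_add fun ε hε => by
      simpa using hle ε hε
    exact dist_le_zero.mp h0
  -- extract two active affine pieces with distinct gradients at y₀
  obtain ⟨i, j, hi, hj, hvij⟩ := nondiff_char v c f hf hnd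
  refine ⟨i, j, k, fun h => hvij (by rw [h]), hvij, ?_⟩
  rw [← hy0eq]
  rw [← hi, ← hj]
end
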